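/- arXiv:1306.2622 — 2 statements merged into one kernel-verified Lean document; each statement's English description precedes it below -/
import Mathlib

section
/- Let G and H be finite groups, let X be a finite bifree (G,H)-biset, and let L = Δ(R,α,S) be a twisted diagonal subgroup of G×H. Then the number |X^L| of L-fixed points of X (viewed as a left (G×H)-set) is divisible by |C_G(R)| and by |C_H(S)|. -/
open MulAction

/-- An isomorphism of `M`-sets: an equivariant bijection. -/
def IsoAsGSets (M X Y : Type*) [SMul M X] [SMul M Y] : Prop :=
  ∃ e : X ≃ Y, ∀ (m : M) (x : X), e (m • x) = m • e x

/-- The twisted diagonal subgroup `Δ(R,α,S) = {(α s, s) | s ∈ S}` of `G × H`,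
for an isomorphism `α : S ≃* R`. -/
def twistedDiagonal {G H : Type*} [Group G] [Group H] (R : Subgroup G) (S : Subgroup H)
    (α : S ≃* R) : Subgroup (G × H) :=
  ((R.subtype.comp α.toMonoidHom).prod S.subtype).range

/-- `Δ(G,φ,H) = {(φ h, h) | h ∈ H} ≤ G × H` for an isomorphism `φ : H ≃* G`. -/
def fullTwistedDiagonal {G H : Type*} [Group G] [Group H] (φ : H ≃* G) : Subgroup (G × H) :=
  (φ.toMonoidHom.prod (MonoidHom.id H)).range

/-- The diagonal subgroup `Δ(R) = {(r,r) | r ∈ R} ≤ G × G`. -/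
def diagSubgroup {G : Type*} [Group G] (R : Subgroup G) : Subgroup (G × G) :=
  (R.subtype.prod R.subtype).range

/-- A `(G,H)`-biset (i.e. a left `(G × H)`-set) is bifree if it is free as a left `G`-set
and free as a right `H`-set. -/
def IsBifree (G H X : Type*) [Group G] [Group H] [MulAction (G × H) X] : Prop :=
  (∀ (g : G) (x : X), (g, (1 : H)) • x = x → g = 1) ∧
  (∀ (h : H) (x : X), ((1 : G), h) • x = x → h = 1)

section Tensor

variable (G H K : Type*) [Group G] [Group H] [Group K]
variable (X Y : Type*) [MulAction (G × H) X] [MulAction (H × K) Y]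

/-- The relation on `X × Y` identifying `(x·h, y)` with `(x, h·y)`. -/
def bisetSetoid : Setoid (X × Y) where
  r p q := ∃ h : H, q.1 = ((1 : G), h) • p.1 ∧ q.2 = (h, (1 : K)) • p.2
  iseqv := by
    constructor
    · intro p
      exact ⟨1, by simp [Prod.mk_one_one], by simp [Prod.mk_one_one]⟩
    · rintro p q ⟨h, h1, h2⟩
      exact ⟨h⁻¹, by simp [h1, smul_smul, Prod.mk_one_one], by simp [h2, smul_smul, Prod.mk_one_one]⟩
    · rintro p q r ⟨h, h1, h2⟩ ⟨h', h1', h2'⟩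
      exact ⟨h' * h, by simp [h1, h1', smul_smul], by simp [h2, h2', smul_smul]⟩

/-- The tensor product `X ×_H Y` of a `(G,H)`-biset and an `(H,K)`-biset;
a `(G,K)`-biset. -/
def BisetTensor : Type _ :=
  Quotient (bisetSetoid G H K X Y)

variable {G H K X Y}

/-- The class of `(x, y)` in `X ×_H Y`. -/
def BisetTensor.mk (p : X × Y) : BisetTensor G H K X Y :=
  Quotient.mk (bisetSetoid G H K X Y) p

variable (G H K X Y)

instance : SMul (G × K) (BisetTensor G H K X Y) :=
  ⟨fun a => Quotient.map (fun p => ((a.1, (1 : H)) • p.1, ((1 : H), a.2) • p.2))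
    (by
      rintro p q ⟨h, h1, h2⟩
      try dsimp only
      exact ⟨h, by simp [h1, smul_smul], by simp [h2, smul_smul]⟩)⟩

variable {G H K X Y}

theorem BisetTensor.smul_mk (a : G × K) (p : X × Y) :
    a • (BisetTensor.mk p : BisetTensor G H K X Y) =
      BisetTensor.mk ((a.1, (1 : H)) • p.1, ((1 : H), a.2) • p.2) :=
  rfl

variable (G H K X Y)

instance : MulAction (G × K) (BisetTensor G H K X Y) where
  one_smul q := Quotient.inductionOn q fun p => by
    refine Quotient.sound ⟨1, ?_, ?_⟩ <;> simp [Prod.mk_one_one]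
  mul_smul a b q := Quotient.inductionOn q fun p => by
    refine Quotient.sound ⟨1, ?_, ?_⟩ <;> simp [smul_smul, Prod.mk_one_one]

end Tensor

section Op

/-- The opposite biset: a `(G,H)`-biset viewed as an `(H,G)`-biset via
`h · x · g := g⁻¹ · x · h⁻¹`. -/
def BisetOp (H G X : Type*) : Type _ := (fun _ _ => X) H G

instance BisetOp.instMulAction {G H : Type*} [Group G] [Group H] (X : Type*)
    [MulAction (G × H) X] : MulAction (H × G) (BisetOp H G X) :=
  MulAction.compHom X (MulEquiv.prodComm : H × G ≃* G × H).toMonoidHom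

instance BisetOp.instFinite {G H : Type*} (X : Type*) [Finite X] : Finite (BisetOp H G X) :=
  inferInstanceAs (Finite X)

end Op

section Grp

/-- The group `G` viewed as a `(G,G)`-biset via left and right multiplication. -/
structure BisetGrp (G : Type*) where
  /-- the underlying group element -/
  val : G

instance BisetGrp.instSMul {G : Type*} [Group G] : SMul (G × G) (BisetGrp G) :=
  ⟨fun p x => ⟨p.1 * x.val * p.2⁻¹⟩⟩

theorem BisetGrp.smul_def {G : Type*} [Group G] (p : G × G) (x : BisetGrp G) :
    p • x = ⟨p.1 * x.val * p.2⁻¹⟩ := rfl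

instance BisetGrp.instMulAction {G : Type*} [Group G] : MulAction (G × G) (BisetGrp G) where
  one_smul x := by
    cases x
    simp [BisetGrp.smul_def]
  mul_smul p q x := by
    cases x
    simp [BisetGrp.smul_def, mul_assoc]

instance BisetGrp.instFinite {G : Type*} [Finite G] : Finite (BisetGrp G) :=
  Finite.of_equiv G ⟨fun g => ⟨g⟩, fun x => x.val, fun _ => rfl, fun _ => rfl⟩

end Grp

/-- A pair `(X,Y)` of `(G,H)`-bisets is an orthogonal pair if
`(X ×_H X°) ⊔ (Y ×_H Y°) ≅ G ⊔ (X ×_H Y°) ⊔ (Y ×_H X°)` as `(G,G)`-bisets;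
this encodes the equation `([X] - [Y]) ·_H ([X] - [Y])° = [G]` in `B^Δ(G,G)`. -/
def IsOrthogonalPair (G H : Type*) [Group G] [Group H] (X Y : Type*)
    [MulAction (G × H) X] [MulAction (G × H) Y] : Prop :=
  IsoAsGSets (G × G)
    (BisetTensor G H G X (BisetOp H G X) ⊕ BisetTensor G H G Y (BisetOp H G Y))
    (BisetGrp G ⊕ (BisetTensor G H G X (BisetOp H G Y) ⊕ BisetTensor G H G Y (BisetOp H G X)))

section Iota

/-- For a `G`-set `Z`, the `(G,G)`-biset `ι(Z) = G × Z` with action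
`(g₁,g₂) • (g,z) = (g₁ g g₂⁻¹, g₂ • z)`. -/
structure IotaBiset (G Z : Type*) where
  /-- the group component -/
  fst : G
  /-- the `G`-set component -/
  snd : Z

instance IotaBiset.instSMul {G Z : Type*} [Group G] [MulAction G Z] :
    SMul (G × G) (IotaBiset G Z) :=
  ⟨fun p x => ⟨p.1 * x.fst * p.2⁻¹, p.2 • x.snd⟩⟩

theorem IotaBiset.smul_def {G Z : Type*} [Group G] [MulAction G Z] (p : G × G)
    (x : IotaBiset G Z) : p • x = ⟨p.1 * x.fst * p.2⁻¹, p.2 • x.snd⟩ := rfl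

instance IotaBiset.instMulAction {G Z : Type*} [Group G] [MulAction G Z] :
    MulAction (G × G) (IotaBiset G Z) where
  one_smul x := by
    cases x
    simp [IotaBiset.smul_def]
  mul_smul p q x := by
    cases x
    simp [IotaBiset.smul_def, mul_assoc, mul_smul]

instance IotaBiset.instFinite {G Z : Type*} [Finite G] [Finite Z] : Finite (IotaBiset G Z) :=
  Finite.of_equiv (G × Z) ⟨fun p => ⟨p.1, p.2⟩, fun x => (x.fst, x.snd), fun _ => rfl,
    fun _ => rfl⟩

end Iota

/-! The centralizer `C_G(R)`, embedded in `G × H` as `C_G(R) × 1`, commutes with `L = Δ(R,α,S)`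
and therefore permutes the fixed points `X^L`. Since `X` is free as a left `G`-set, this action is
free, so `X^L` is a disjoint union of regular `C_G(R)`-orbits and `|C_G(R)|` divides `|X^L|`.
The same argument with `1 × C_H(S)` and right freeness gives divisibility by `|C_H(S)|`. -/

theorem MulAction.card_dvd_card_of_stabilizer_eq_bot {K Y : Type*} [Group K] [MulAction K Y]
    (h : ∀ y : Y, stabilizer K y = ⊥) : Nat.card K ∣ Nat.card Y := by
  rw [Nat.card_congr (selfEquivOrbitsQuotientProd h), Nat.card_prod]
  exact dvd_mul_left _ _

section FixedPoints

variable {M X : Type*} [Group M] [MulAction M X] {L : Subgroup M}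

theorem smul_mem_fixedPoints_of_mem_centralizer {c : M} (hc : c ∈ Subgroup.centralizer (L : Set M))
    {x : X} (hx : x ∈ fixedPoints L X) : c • x ∈ fixedPoints L X := fun l => by
  rw [Subgroup.smul_def, smul_smul, Subgroup.mem_centralizer_iff.mp hc l l.2, mul_smul,
    ← Subgroup.smul_def, hx l]

theorem card_dvd_card_fixedPoints {K : Subgroup M} (hKL : K ≤ Subgroup.centralizer (L : Set M))
    (hfree : ∀ k ∈ K, ∀ x : X, k • x = x → k = 1) :
    Nat.card K ∣ Nat.card (fixedPoints L X) := by
  let P : SubMulAction K X :=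
    { carrier := fixedPoints L X
      smul_mem' := fun k _ hx => smul_mem_fixedPoints_of_mem_centralizer (hKL k.2) hx }
  refine MulAction.card_dvd_card_of_stabilizer_eq_bot (Y := P) fun x => ?_
  refine (Subgroup.eq_bot_iff_forall _).mpr fun k hk => Subtype.ext ?_
  exact hfree k k.2 x (congrArg Subtype.val hk)

end FixedPoints

section TwistedDiagonal

variable {G H : Type*} [Group G] [Group H] (R : Subgroup G) (S : Subgroup H) (α : S ≃* R)

theorem map_inl_centralizer_le_centralizer_twistedDiagonal :
    (Subgroup.centralizer (R : Set G)).map (MonoidHom.inl G H) ≤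
      Subgroup.centralizer (twistedDiagonal R S α : Set (G × H)) := by
  rintro _ ⟨c, hc, rfl⟩
  rw [Subgroup.mem_centralizer_iff]
  rintro _ ⟨s, rfl⟩
  simp [Subgroup.mem_centralizer_iff.mp hc _ (α s).2]

theorem map_inr_centralizer_le_centralizer_twistedDiagonal :
    (Subgroup.centralizer (S : Set H)).map (MonoidHom.inr G H) ≤
      Subgroup.centralizer (twistedDiagonal R S α : Set (G × H)) := by
  rintro _ ⟨c, hc, rfl⟩
  rw [Subgroup.mem_centralizer_iff]
  rintro _ ⟨s, rfl⟩
  simp [Subgroup.mem_centralizer_iff.mp hc _ s.2]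

end TwistedDiagonal

theorem statement1_general {G H : Type*} [Group G] [Group H]
    (X : Type*) [MulAction (G × H) X] (hX : IsBifree G H X)
    (R : Subgroup G) (S : Subgroup H) (α : S ≃* R) :
    Nat.card (Subgroup.centralizer (R : Set G)) ∣
        Nat.card (MulAction.fixedPoints (twistedDiagonal R S α) X) ∧
      Nat.card (Subgroup.centralizer (S : Set H)) ∣
        Nat.card (MulAction.fixedPoints (twistedDiagonal R S α) X) := by
  obtain ⟨hfreeG, hfreeH⟩ := hX
  constructor
  · rw [← Subgroup.card_map_of_injective (f := MonoidHom.inl G H) fun _ _ => congrArg Prod.fst]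
    refine card_dvd_card_fixedPoints (map_inl_centralizer_le_centralizer_twistedDiagonal R S α) ?_
    rintro _ ⟨g, -, rfl⟩ x hx
    simp [hfreeG g x hx]
  · rw [← Subgroup.card_map_of_injective (f := MonoidHom.inr G H) fun _ _ => congrArg Prod.snd]
    refine card_dvd_card_fixedPoints (map_inr_centralizer_le_centralizer_twistedDiagonal R S α) ?_
    rintro _ ⟨h, -, rfl⟩ x hx
    simp [hfreeH h x hx]

/-- For a finite bifree `(G,H)`-biset `X` and a twisted diagonal subgroup
`L = Δ(R,α,S)`, the number of `L`-fixed points of `X` is divisible by `|C_G(R)|` and by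
`|C_H(S)|`. -/
theorem statement1 {G H : Type*} [Group G] [Group H] [Finite G] [Finite H]
    (X : Type*) [MulAction (G × H) X] [Finite X] (hX : IsBifree G H X)
    (R : Subgroup G) (S : Subgroup H) (α : S ≃* R) :
    Nat.card (Subgroup.centralizer (R : Set G)) ∣
        Nat.card (MulAction.fixedPoints (twistedDiagonal R S α) X) ∧
      Nat.card (Subgroup.centralizer (S : Set H)) ∣
        Nat.card (MulAction.fixedPoints (twistedDiagonal R S α) X) :=
  statement1_general X hX R S α
end

section
/- Let G and H be finite groups and let Δ(R,α,S) ≤ G×H be a twisted diagonal subgroup, where α : S → R is an isomorphism, S ≤ H, R ≤ G. Set N_α := {h ∈ N_H(S) : ∃ g ∈ N_G(R) with α∘c_h = c_g∘α on S} and N_{α⁻¹} := {g ∈ N_G(R) : ∃ h ∈ N_H(S) with α∘c_h = c_g∘α on S}. Then |N_{G×H}(Δ(R,α,S))| = |N_{α⁻¹}| · |C_H(S)| = |C_G(R)| · |N_α|. -/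
open MulAction

/-- `N_α = {h ∈ N_H(S) : ∃ g ∈ N_G(R), α ∘ c_h = c_g ∘ α on S}`. -/
def NsetAlpha {G H : Type*} [Group G] [Group H] (R : Subgroup G) (S : Subgroup H)
    (α : S ≃* R) : Set H :=
  {h | h ∈ Subgroup.normalizer (S : Set H) ∧ ∃ g ∈ Subgroup.normalizer (R : Set G),
    ∀ s t : S, (t : H) = h * (s : H) * h⁻¹ → (α t : G) = g * (α s : G) * g⁻¹}

/-- `N_{α⁻¹} = {g ∈ N_G(R) : ∃ h ∈ N_H(S), α ∘ c_h = c_g ∘ α on S}`. -/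
def NsetAlphaInv {G H : Type*} [Group G] [Group H] (R : Subgroup G) (S : Subgroup H)
    (α : S ≃* R) : Set G :=
  {g | g ∈ Subgroup.normalizer (R : Set G) ∧ ∃ h ∈ Subgroup.normalizer (S : Set H),
    ∀ s t : S, (t : H) = h * (s : H) * h⁻¹ → (α t : G) = g * (α s : G) * g⁻¹}

/-!
An element `(g, h)` normalizes `Δ(R, α, S)` exactly when `g ∈ N_G(R)`, `h ∈ N_H(S)` and
`α ∘ c_h = c_g ∘ α` on `S`. So the projection of `N_{G×H}(Δ(R, α, S))` to `G` has image
`N_{α⁻¹}` and kernel `1 × C_H(S)`, and its projection to `H` has image `N_α` and kernel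
`C_G(R) × 1`; both formulas are `|N| = |image| · |kernel|`.
-/

namespace Subgroup

variable {G H : Type*} [Group G] [Group H]

theorem card_eq_card_map_fst_mul_card_comap_inr (K : Subgroup (G × H)) :
    Nat.card K =
      Nat.card (K.map (MonoidHom.fst G H)) * Nat.card (K.comap (MonoidHom.inr G H)) := by
  let f := (MonoidHom.fst G H).comp K.subtype
  have hrange : f.range = K.map (MonoidHom.fst G H) := by
    rw [MonoidHom.range_comp, K.range_subtype]
  have hker (x : f.ker) : (x : K).1 = (1, (x : K).1.2) := Prod.ext x.2 rfl
  let e : f.ker ≃ K.comap (MonoidHom.inr G H) :=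
    { toFun x := ⟨(x : K).1.2, by simp [← hker]⟩
      invFun h := ⟨⟨(1, h), h.2⟩, rfl⟩
      left_inv x := by ext1; ext1; exact (hker x).symm
      right_inv _ := rfl }
  rw [← card_mul_index f.ker, index_ker, hrange, Nat.card_congr e, mul_comm]

theorem card_eq_card_comap_inl_mul_card_map_snd (K : Subgroup (G × H)) :
    Nat.card K =
      Nat.card (K.comap (MonoidHom.inl G H)) * Nat.card (K.map (MonoidHom.snd G H)) := by
  let f := (MonoidHom.snd G H).comp K.subtype
  have hrange : f.range = K.map (MonoidHom.snd G H) := by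
    rw [MonoidHom.range_comp, K.range_subtype]
  have hker (x : f.ker) : (x : K).1 = ((x : K).1.1, 1) := Prod.ext rfl x.2
  let e : f.ker ≃ K.comap (MonoidHom.inl G H) :=
    { toFun x := ⟨(x : K).1.1, by simp [← hker]⟩
      invFun g := ⟨⟨(g, 1), g.2⟩, rfl⟩
      left_inv x := by ext1; ext1; exact (hker x).symm
      right_inv _ := rfl }
  rw [← card_mul_index f.ker, index_ker, hrange, Nat.card_congr e]

end Subgroup

open Subgroup

section TwistedDiagonal

variable {G H : Type*} [Group G] [Group H] {R : Subgroup G} {S : Subgroup H} (α : S ≃* R)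

theorem mem_twistedDiagonal_iff {x : G} {y : H} :
    (x, y) ∈ twistedDiagonal R S α ↔ ∃ hy : y ∈ S, (α ⟨y, hy⟩ : G) = x := by
  constructor
  · rintro ⟨s, hs⟩
    obtain ⟨rfl, rfl⟩ := Prod.ext_iff.mp hs
    exact ⟨s.2, rfl⟩
  · rintro ⟨hy, rfl⟩
    exact ⟨⟨y, hy⟩, rfl⟩

theorem map_fst_twistedDiagonal : (twistedDiagonal R S α).map (MonoidHom.fst G H) = R := by
  rw [twistedDiagonal, MonoidHom.map_range, MonoidHom.fst_comp_prod, MonoidHom.range_comp,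
    MonoidHom.range_eq_top.mpr α.surjective, ← MonoidHom.range_eq_map, R.range_subtype]

theorem map_snd_twistedDiagonal : (twistedDiagonal R S α).map (MonoidHom.snd G H) = S := by
  rw [twistedDiagonal, MonoidHom.map_range, MonoidHom.snd_comp_prod, S.range_subtype]

theorem mem_normalizer_twistedDiagonal_iff {g : G} {h : H} :
    (g, h) ∈ normalizer (twistedDiagonal R S α : Set (G × H)) ↔
      g ∈ normalizer (R : Set G) ∧ h ∈ normalizer (S : Set H) ∧
        ∀ s t : S, (t : H) = h * s * h⁻¹ → (α t : G) = g * α s * g⁻¹ := by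
  constructor
  · intro hgh
    refine ⟨map_fst_twistedDiagonal α ▸ le_normalizer_map _ ⟨_, hgh, rfl⟩,
      map_snd_twistedDiagonal α ▸ le_normalizer_map _ ⟨_, hgh, rfl⟩, ?_⟩
    intro s t ht
    have hconj : (g * α s * g⁻¹, h * s * h⁻¹) ∈ twistedDiagonal R S α :=
      (mem_normalizer_iff.mp hgh (α s, s)).mp ⟨s, rfl⟩
    obtain ⟨hmem, hαt⟩ := (mem_twistedDiagonal_iff α).mp hconj
    obtain rfl : t = ⟨_, hmem⟩ := Subtype.ext ht
    exact hαt
  · rintro ⟨-, hS, hα⟩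
    refine mem_normalizer_iff.mpr fun ⟨x, y⟩ => ?_
    simp only [Prod.mk_mul_mk, Prod.inv_mk, mem_twistedDiagonal_iff]
    have hSy : y ∈ S ↔ h * y * h⁻¹ ∈ S := mem_normalizer_iff.mp hS y
    constructor
    · rintro ⟨hy, rfl⟩
      exact ⟨hSy.mp hy, hα _ _ rfl⟩
    · rintro ⟨hy, hx⟩
      refine ⟨hSy.mpr hy, ?_⟩
      rw [hα ⟨y, hSy.mpr hy⟩ _ rfl] at hx
      exact mul_left_cancel (mul_right_cancel hx)

theorem coe_map_fst_normalizer_twistedDiagonal :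
    ((normalizer (twistedDiagonal R S α : Set (G × H))).map (MonoidHom.fst G H) : Set G) =
      NsetAlphaInv R S α := by
  ext g
  simp only [coe_map, Set.mem_image, SetLike.mem_coe, Prod.exists, MonoidHom.coe_fst,
    mem_normalizer_twistedDiagonal_iff]
  constructor
  · rintro ⟨_, h, ⟨hR, hS, hα⟩, rfl⟩
    exact ⟨hR, h, hS, hα⟩
  · rintro ⟨hR, h, hS, hα⟩
    exact ⟨g, h, ⟨hR, hS, hα⟩, rfl⟩

theorem coe_map_snd_normalizer_twistedDiagonal :
    ((normalizer (twistedDiagonal R S α : Set (G × H))).map (MonoidHom.snd G H) : Set H) =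
      NsetAlpha R S α := by
  ext h
  simp only [coe_map, Set.mem_image, SetLike.mem_coe, Prod.exists, MonoidHom.coe_snd,
    mem_normalizer_twistedDiagonal_iff]
  constructor
  · rintro ⟨g, _, ⟨hR, hS, hα⟩, rfl⟩
    exact ⟨hS, g, hR, hα⟩
  · rintro ⟨hS, g, hR, hα⟩
    exact ⟨g, h, ⟨hR, hS, hα⟩, rfl⟩

theorem comap_inr_normalizer_twistedDiagonal :
    (normalizer (twistedDiagonal R S α : Set (G × H))).comap (MonoidHom.inr G H) =
      centralizer S := by
  ext h
  rw [mem_comap, MonoidHom.inr_apply, mem_normalizer_twistedDiagonal_iff]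
  simp only [one_mul, inv_one, mul_one]
  constructor
  · rintro ⟨-, hS, hα⟩
    refine mem_centralizer_iff.mpr fun n hn => ?_
    have hconj := hα ⟨n, hn⟩ ⟨h * n * h⁻¹, (mem_normalizer_iff.mp hS n).mp hn⟩ rfl
    have : h * n * h⁻¹ = n := congrArg Subtype.val (α.injective (Subtype.ext hconj))
    exact (mul_inv_eq_iff_eq_mul.mp this).symm
  · intro hc
    refine ⟨one_mem _, centralizer_le_normalizer _ hc, fun s t hts => ?_⟩
    obtain rfl : t = s := Subtype.ext <| by
      rw [hts, ← mem_centralizer_iff.mp hc s s.2, mul_inv_cancel_right]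
    rfl

theorem comap_inl_normalizer_twistedDiagonal :
    (normalizer (twistedDiagonal R S α : Set (G × H))).comap (MonoidHom.inl G H) =
      centralizer R := by
  ext g
  rw [mem_comap, MonoidHom.inl_apply, mem_normalizer_twistedDiagonal_iff]
  simp only [one_mul, inv_one, mul_one]
  constructor
  · rintro ⟨-, -, hα⟩
    refine mem_centralizer_iff.mpr fun n hn => ?_
    have hconj := hα (α.symm ⟨n, hn⟩) _ rfl
    rw [α.apply_symm_apply] at hconj
    exact eq_mul_inv_iff_mul_eq.mp hconj
  · intro hc
    refine ⟨centralizer_le_normalizer _ hc, one_mem _, fun s t hts => ?_⟩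
    obtain rfl : t = s := Subtype.ext hts
    exact eq_mul_inv_of_mul_eq (mem_centralizer_iff.mp hc _ (α t).2)

end TwistedDiagonal

theorem statement6_general {G H : Type*} [Group G] [Group H]
    (R : Subgroup G) (S : Subgroup H) (α : S ≃* R) :
    Nat.card (Subgroup.normalizer (twistedDiagonal R S α : Set (G × H))) =
        Nat.card (NsetAlphaInv R S α) * Nat.card (Subgroup.centralizer (S : Set H)) ∧
      Nat.card (Subgroup.normalizer (twistedDiagonal R S α : Set (G × H))) =
        Nat.card (Subgroup.centralizer (R : Set G)) * Nat.card (NsetAlpha R S α) := by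
  set N := normalizer (twistedDiagonal R S α : Set (G × H))
  constructor
  · rw [N.card_eq_card_map_fst_mul_card_comap_inr, comap_inr_normalizer_twistedDiagonal,
      ← coe_map_fst_normalizer_twistedDiagonal]
    rfl
  · rw [N.card_eq_card_comap_inl_mul_card_map_snd, comap_inl_normalizer_twistedDiagonal,
      ← coe_map_snd_normalizer_twistedDiagonal]
    rfl

/-- `|N_{G×H}(Δ(R,α,S))| = |N_{α⁻¹}|·|C_H(S)| = |C_G(R)|·|N_α|`. -/
theorem statement6 {G H : Type*} [Group G] [Group H] [Finite G] [Finite H]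
    (R : Subgroup G) (S : Subgroup H) (α : S ≃* R) :
    Nat.card (Subgroup.normalizer (twistedDiagonal R S α : Set (G × H))) =
        Nat.card (NsetAlphaInv R S α) * Nat.card (Subgroup.centralizer (S : Set H)) ∧
      Nat.card (Subgroup.normalizer (twistedDiagonal R S α : Set (G × H))) =
        Nat.card (Subgroup.centralizer (R : Set G)) * Nat.card (NsetAlpha R S α) :=
  statement6_general R S α
end
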